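/- For every n ≥ 0, the polynomial complex ℝ → P_{n+2}(ℝ³) → [P_{n+1}(ℝ³)]³ → [P_n(ℝ³)]³ → P_{n-1}(ℝ³) → 0, with maps given by inclusion of constants, gradient, curl, and divergence, is exact: the kernel of ∇ on P_{n+2} is the constants, the kernel of curl on [P_{n+1}]³ equals the image of ∇, the kernel of div on [P_n]³ equals the image of curl, and div maps [P_n]³ onto P_{n-1}. -/

import Mathlib

/-!
The complex is exact by the polynomial Poincaré lemma. The radial integral
`R_c p = ∫₀¹ tᶜ p(t x) dt` satisfies `∂ᵢ R_c = R_{c+1} ∂ᵢ` and `xⱼ R_{c+1} = R_c xⱼ`, and by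
Euler's identity `R_c ((c + 1) p + x · ∇p) = p`. Consequently a curl-free `v` is the gradient
of `x · R_0 v`, a divergence-free `v` is the curl of `R_1 v × x`, and `p` is the divergence of
`x R_2 p`. The radial integral does not raise degrees, so each potential has degree one more
than its input.
-/

open MvPolynomial

noncomputable section

abbrev Poly3 := MvPolynomial (Fin 3) ℝ

/-- `p ∈ P_m(ℝ³)` (total degree at most `m`, with `P_m = {0}` for `m < 0`). -/
def degLE (m : ℤ) (p : Poly3) : Prop := p = 0 ∨ (p.totalDegree : ℤ) ≤ m

/-- Gradient of a scalar polynomial. -/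
def pgrad (q : Poly3) : Fin 3 → Poly3 := fun i => pderiv i q

/-- Curl of a vector polynomial. -/
def pcurl (v : Fin 3 → Poly3) : Fin 3 → Poly3 :=
  ![pderiv 1 (v 2) - pderiv 2 (v 1),
    pderiv 2 (v 0) - pderiv 0 (v 2),
    pderiv 0 (v 1) - pderiv 1 (v 0)]

/-- Divergence of a vector polynomial. -/
def pdiv (v : Fin 3 → Poly3) : Poly3 := ∑ i, pderiv i (v i)

namespace MvPolynomial

theorem pderiv_comm {σ R : Type*} [CommRing R] (i j : σ) (p : MvPolynomial σ R) :
    pderiv i (pderiv j p) = pderiv j (pderiv i p) := by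
  classical
  have h : ⁅pderiv i, pderiv j⁆ = (0 : Derivation R (MvPolynomial σ R) (MvPolynomial σ R)) :=
    derivation_ext fun k => by
      rw [Derivation.commutator_apply, pderiv_X, pderiv_X, Pi.single_apply, Pi.single_apply]
      split_ifs <;> simp
  simpa [Derivation.commutator_apply, sub_eq_zero] using congr($h p)

theorem eq_C_of_forall_pderiv_eq_zero {σ K : Type*} [Field K] [CharZero K] {q : MvPolynomial σ K}
    (h : ∀ i, pderiv i q = 0) : q = C (coeff 0 q) := by
  classical
  ext α
  rw [coeff_C]
  split_ifs with hα
  · rw [hα]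
  obtain ⟨i, hi⟩ : ∃ i, α i ≠ 0 := by
    by_contra! hzero
    exact hα (Finsupp.ext fun k => (hzero k).symm)
  have hcoeff := congr(coeff (α - Finsupp.single i 1) $(h i))
  rw [coeff_pderiv, Finsupp.sub_add_single_one_cancel hi, coeff_zero] at hcoeff
  exact (mul_eq_zero.mp hcoeff).resolve_right (Nat.cast_add_one_ne_zero _)

section RadialIntegral

variable {σ K : Type*} [Field K]

/-- `∫₀¹ tᶜ p(t x) dt`, computed monomialwise from `∫₀¹ tᶜ⁺ᵈ dt = 1 / (d + c + 1)`. -/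
def radialIntegral (c : ℕ) : MvPolynomial σ K →ₗ[K] MvPolynomial σ K :=
  Finsupp.lsum K (fun α => (α.degree + c + 1 : K)⁻¹ • monomial α) ∘ₗ
    (AddMonoidAlgebra.coeffLinearEquiv K).toLinearMap

theorem radialIntegral_monomial (c : ℕ) (α : σ →₀ ℕ) (a : K) :
    radialIntegral c (monomial α a) = monomial α ((α.degree + c + 1 : K)⁻¹ * a) := by
  simp [radialIntegral, smul_monomial]

theorem coeff_radialIntegral (c : ℕ) (p : MvPolynomial σ K) (α : σ →₀ ℕ) :
    coeff α (radialIntegral c p) = (α.degree + c + 1 : K)⁻¹ * coeff α p := by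
  classical
  induction p using MvPolynomial.induction_on' with
  | monomial β a =>
    rw [radialIntegral_monomial, coeff_monomial, coeff_monomial]
    split_ifs with h <;> simp [h]
  | add p q hp hq => simp only [map_add, coeff_add, hp, hq, mul_add]

theorem totalDegree_radialIntegral_le (c : ℕ) (p : MvPolynomial σ K) :
    (radialIntegral c p).totalDegree ≤ p.totalDegree :=
  totalDegree_le_of_support_subset fun α hα => by
    rw [mem_support_iff, coeff_radialIntegral] at hα
    rw [mem_support_iff]
    exact right_ne_zero_of_mul hα

theorem pderiv_radialIntegral (c : ℕ) (i : σ) (p : MvPolynomial σ K) :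
    pderiv i (radialIntegral c p) = radialIntegral (c + 1) (pderiv i p) := by
  classical
  ext α
  rw [coeff_pderiv, coeff_radialIntegral, coeff_radialIntegral, coeff_pderiv,
    map_add, Finsupp.degree_single]
  push_cast
  ring

theorem X_mul_radialIntegral (c : ℕ) (j : σ) (p : MvPolynomial σ K) :
    X j * radialIntegral (c + 1) p = radialIntegral c (X j * p) := by
  induction p using MvPolynomial.induction_on' with
  | monomial β a =>
    simp only [radialIntegral_monomial, X, monomial_mul, one_mul, map_add, Finsupp.degree_single]
    push_cast
    ring_nf
  | add p q hp hq => simp only [map_add, mul_add, hp, hq]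

variable [Fintype σ] [CharZero K]

-- Euler: `∑ xᵢ ∂ᵢ` multiplies the homogeneous part of degree `d` by `d`.
theorem radialIntegral_add_euler (c : ℕ) (p : MvPolynomial σ K) :
    radialIntegral c ((c + 1) • p + ∑ i, X i * pderiv i p) = p := by
  induction p using MvPolynomial.induction_on' with
  | monomial β a =>
    rw [(isHomogeneous_monomial a rfl).sum_X_mul_pderiv, ← add_smul, map_nsmul,
      radialIntegral_monomial, ← map_nsmul, nsmul_eq_mul]
    congr 1
    have : (β.degree + c + 1 : K) ≠ 0 := by exact_mod_cast (β.degree + c).succ_ne_zero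
    push_cast
    field_simp
    ring
  | add p q hp hq =>
    convert congr($hp + $hq) using 1
    rw [← map_add]
    congr 1
    simp only [map_add, smul_add, mul_add, Finset.sum_add_distrib]
    abel

theorem pderiv_sum_X_mul_radialIntegral {v : σ → MvPolynomial σ K}
    (hv : ∀ i j, pderiv i (v j) = pderiv j (v i)) (i : σ) :
    pderiv i (∑ j, X j * radialIntegral 0 (v j)) = v i := by
  classical
  calc pderiv i (∑ j, X j * radialIntegral 0 (v j))
      = radialIntegral 0 (v i) + ∑ j, X j * radialIntegral 1 (pderiv j (v i)) := by
        simp only [map_sum, pderiv_mul, pderiv_X, Pi.single_apply, pderiv_radialIntegral, hv i,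
          Finset.sum_add_distrib, ite_mul, one_mul, zero_mul, Finset.sum_ite_eq', Finset.mem_univ,
          if_true]
    _ = radialIntegral 0 ((0 + 1) • v i + ∑ j, X j * pderiv j (v i)) := by
        rw [map_add, zero_add, one_smul, map_sum]
        simp only [X_mul_radialIntegral]
    _ = v i := radialIntegral_add_euler 0 (v i)

theorem sum_pderiv_X_mul_radialIntegral {c : ℕ} (hc : Fintype.card σ = c + 1)
    (p : MvPolynomial σ K) : ∑ i, pderiv i (X i * radialIntegral c p) = p := by
  calc ∑ i, pderiv i (X i * radialIntegral c p)
      = (c + 1) • radialIntegral c p + ∑ i, X i * radialIntegral (c + 1) (pderiv i p) := by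
        simp only [pderiv_mul, pderiv_X_self, one_mul, pderiv_radialIntegral,
          Finset.sum_add_distrib, Finset.sum_const, Finset.card_univ, hc]
    _ = radialIntegral c ((c + 1) • p + ∑ i, X i * pderiv i p) := by
        rw [map_add, map_nsmul, map_sum]
        simp only [X_mul_radialIntegral]
    _ = p := radialIntegral_add_euler c p

end RadialIntegral

end MvPolynomial

open Matrix

theorem degLE.mono {m m' : ℤ} {p : Poly3} (hp : degLE m p) (h : m ≤ m') : degLE m' p :=
  hp.imp_right (le_trans · h)

theorem degLE_zero (m : ℤ) : degLE m 0 := Or.inl rfl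

theorem degLE_X (j : Fin 3) : degLE 1 (X j) := Or.inr (by simp [totalDegree_X])

theorem degLE.add {m : ℤ} {p q : Poly3} (hp : degLE m p) (hq : degLE m q) : degLE m (p + q) := by
  rcases hp with rfl | hp
  · rwa [zero_add]
  rcases hq with rfl | hq
  · rw [add_zero]; exact Or.inr hp
  exact Or.inr (by have := totalDegree_add p q; omega)

theorem degLE.neg {m : ℤ} {p : Poly3} (hp : degLE m p) : degLE m (-p) := by
  rcases hp with rfl | hp
  · exact Or.inl neg_zero
  · exact Or.inr (by rwa [totalDegree_neg])

theorem degLE.sub {m : ℤ} {p q : Poly3} (hp : degLE m p) (hq : degLE m q) : degLE m (p - q) :=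
  sub_eq_add_neg p q ▸ hp.add hq.neg

theorem degLE.sum {ι : Type*} {s : Finset ι} {m : ℤ} {f : ι → Poly3}
    (hf : ∀ i ∈ s, degLE m (f i)) : degLE m (∑ i ∈ s, f i) :=
  Finset.sum_induction f (degLE m) (fun _ _ => degLE.add) (degLE_zero m) hf

theorem degLE.mul {m k : ℤ} {p q : Poly3} (hp : degLE m p) (hq : degLE k q) :
    degLE (m + k) (p * q) := by
  rcases hp with rfl | hp
  · exact Or.inl (zero_mul q)
  rcases hq with rfl | hq
  · exact Or.inl (mul_zero p)
  exact Or.inr (by have := totalDegree_mul p q; omega)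

theorem degLE.radialIntegral {m : ℤ} {p : Poly3} (hp : degLE m p) (c : ℕ) :
    degLE m (radialIntegral c p) := by
  rcases hp with rfl | hp
  · exact Or.inl (map_zero _)
  · exact Or.inr (le_trans (by exact_mod_cast totalDegree_radialIntegral_le c p) hp)

theorem degLE_cross_X {m : ℤ} {w : Fin 3 → Poly3} (hw : ∀ i, degLE m (w i)) (i : Fin 3) :
    degLE (m + 1) ((w ⨯₃ X) i) := by
  have hwX (j k : Fin 3) : degLE (m + 1) (w j * X k) := (hw j).mul (degLE_X k)
  rw [cross_apply]
  fin_cases i <;> exact (hwX _ _).sub (hwX _ _)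

theorem pcurl_eq_zero_iff {v : Fin 3 → Poly3} :
    pcurl v = 0 ↔ ∀ i j, pderiv i (v j) = pderiv j (v i) := by
  constructor
  · intro h i j
    have h0 := congrFun h 0
    have h1 := congrFun h 1
    have h2 := congrFun h 2
    simp only [pcurl, cons_val, Pi.zero_apply, sub_eq_zero] at h0 h1 h2
    fin_cases i <;> fin_cases j <;> grind
  · intro h
    funext i
    fin_cases i <;> simp [pcurl, h 1 2, h 2 0, h 0 1]

theorem pcurl_pgrad (q : Poly3) : pcurl (pgrad q) = 0 :=
  pcurl_eq_zero_iff.2 fun i j => pderiv_comm i j q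

theorem pdiv_pcurl (w : Fin 3 → Poly3) : pdiv (pcurl w) = 0 := by
  simp only [pdiv, pcurl, Fin.sum_univ_three, cons_val, map_sub]
  linear_combination pderiv_comm 0 1 (w 2) + pderiv_comm 1 2 (w 0) + pderiv_comm 2 0 (w 1)

theorem pcurl_radialIntegral_cross_X {v : Fin 3 → Poly3} (hv : pdiv v = 0) :
    pcurl ((fun i => radialIntegral 1 (v i)) ⨯₃ X) = v := by
  have hdiv (i : Fin 3) : radialIntegral 1 (X i * pdiv v) = 0 := by rw [hv, mul_zero, map_zero]
  have heuler (i : Fin 3) := radialIntegral_add_euler 1 (v i)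
  simp only [pdiv, Fin.sum_univ_three, mul_add, map_add, map_nsmul] at hdiv heuler
  funext i
  fin_cases i <;>
    simp only [Fin.zero_eta, Fin.mk_one, Fin.reduceFinMk, pcurl, cross_apply, cons_val, map_sub,
      Derivation.leibniz, smul_eq_mul, pderiv_X_self, pderiv_X_of_ne, ne_eq, Fin.reduceEq,
      not_false_eq_true, pderiv_radialIntegral, X_mul_radialIntegral]
  · linear_combination heuler 0 - hdiv 0
  · linear_combination heuler 1 - hdiv 1
  · linear_combination heuler 2 - hdiv 2

/-- Exactness of the polynomial complex
`ℝ → P_{n+2} → [P_{n+1}]³ → [P_n]³ → P_{n-1} → 0` with maps inclusion of constants,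
gradient, curl and divergence. -/
theorem poly_complex_exact (n : ℕ) :
    -- kernel of ∇ on P_{n+2} is the constants
    (∀ q : Poly3, degLE ((n : ℤ) + 2) q → (pgrad q = 0 ↔ ∃ c : ℝ, q = C c)) ∧
    -- kernel of curl on [P_{n+1}]³ equals the image of ∇
    (∀ v : Fin 3 → Poly3, (∀ i, degLE ((n : ℤ) + 1) (v i)) →
      (pcurl v = 0 ↔ ∃ q : Poly3, degLE ((n : ℤ) + 2) q ∧ v = pgrad q)) ∧
    -- kernel of div on [P_n]³ equals the image of curl
    (∀ v : Fin 3 → Poly3, (∀ i, degLE (n : ℤ) (v i)) →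
      (pdiv v = 0 ↔ ∃ w : Fin 3 → Poly3, (∀ i, degLE ((n : ℤ) + 1) (w i)) ∧ v = pcurl w)) ∧
    -- div maps [P_n]³ onto P_{n-1}
    (∀ p : Poly3, degLE ((n : ℤ) - 1) p →
      ∃ v : Fin 3 → Poly3, (∀ i, degLE (n : ℤ) (v i)) ∧ pdiv v = p) := by
  refine ⟨fun q _ => ⟨fun hq => ⟨_, eq_C_of_forall_pderiv_eq_zero (congrFun hq)⟩, ?_⟩,
    fun v hv => ⟨fun hcurl => ?_, ?_⟩, fun v hv => ⟨fun hdiv => ?_, ?_⟩, fun p hp => ?_⟩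
  · rintro ⟨c, rfl⟩
    exact funext fun i => pderiv_C
  · refine ⟨∑ j, X j * radialIntegral 0 (v j), ?_, ?_⟩
    · exact degLE.sum fun j _ => ((degLE_X j).mul ((hv j).radialIntegral 0)).mono (by omega)
    · exact funext fun i => (pderiv_sum_X_mul_radialIntegral (pcurl_eq_zero_iff.1 hcurl) i).symm
  · rintro ⟨q, -, rfl⟩
    exact pcurl_pgrad q
  · exact ⟨(fun i => radialIntegral 1 (v i)) ⨯₃ X,
      degLE_cross_X fun i => (hv i).radialIntegral 1, (pcurl_radialIntegral_cross_X hdiv).symm⟩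
  · rintro ⟨w, -, rfl⟩
    exact pdiv_pcurl w
  · refine ⟨fun i => X i * radialIntegral 2 p, fun i => ?_, sum_pderiv_X_mul_radialIntegral rfl p⟩
    exact ((degLE_X i).mul (hp.radialIntegral 2)).mono (by omega)
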